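/- arXiv:2406.18287 — 3 statements merged into one kernel-verified Lean document; each statement's English description precedes it below -/
import Mathlib

section
/- Let $\mathcal{D}: \mathbb{R}^n \rightrightarrows \mathbb{R}^n$ be locally bounded, graph-closed, and convex-valued with nonempty closed values. Let $\{\delta_k\}$ be a nonnegative sequence with $\delta_k \to 0$, $\{x_k\}$ a bounded sequence in $\mathbb{R}^n$, and $\{d_k\}$ a sequence with $d_k \in \mathrm{conv}(\mathcal{D}^{\delta_k}(x_k))$ for all $k$. Then for every $T > 0$ there exists $K_T$ such that $d_k \in \mathcal{D}^{T}(x_k)$ for all $k \geq K_T$. -/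
/-- The `δ`-expansion of a set-valued map `D`. -/
def deltaExpansion {n : ℕ} (D : EuclideanSpace ℝ (Fin n) → Set (EuclideanSpace ℝ (Fin n)))
    (δ : ℝ) (x : EuclideanSpace ℝ (Fin n)) : Set (EuclideanSpace ℝ (Fin n)) :=
  {w | ∃ z, ‖z - x‖ ≤ δ ∧ Metric.infDist w (D z) ≤ δ}

open Filter

/-! A graph-closed, locally bounded map is upper semicontinuous: near `x₀` its values lie in
the `T/2`-thickening of `D x₀`, so for `x` near `x₀` and small `δ` the whole `δ`-expansion
at `x` lies in the closed `T`-thickening of `D x₀`. That set is convex, so it also contains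
the convex hull, and every point of it lies in `D^T(x)` witnessed by `z = x₀`. Compactness
of a ball containing all `x k` makes the threshold on `δ` uniform in `x`. -/

open Metric Topology

theorem Metric.mem_cthickening_iff_infDist_le {α : Type*} [PseudoMetricSpace α] {s : Set α}
    (hs : s.Nonempty) {δ : ℝ} (hδ : 0 ≤ δ) {x : α} :
    x ∈ cthickening δ s ↔ infDist x s ≤ δ := by
  rw [mem_cthickening_iff, ENNReal.le_ofReal_iff_toReal_le (infEDist_ne_top hs) hδ, infDist]

theorem eventually_subset_of_isClosed_graph {X Y : Type*} [TopologicalSpace X]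
    [TopologicalSpace Y] {D : X → Set Y} (hgraph : IsClosed {p : X × Y | p.2 ∈ D p.1})
    {x₀ : X} {K : Set Y} (hK : IsCompact K) (hDK : ∀ᶠ z in 𝓝 x₀, D z ⊆ K) {U : Set Y}
    (hU : IsOpen U) (hDU : D x₀ ⊆ U) : ∀ᶠ z in 𝓝 x₀, D z ⊆ U := by
  have hfar : ∀ᶠ z in 𝓝 x₀, ∀ y ∈ K \ U, y ∉ D z :=
    (hK.diff hU).eventually_forall_of_forall_eventually fun y hy =>
      hgraph.isOpen_compl.mem_nhds fun hy' => hy.2 (hDU hy')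
  filter_upwards [hfar, hDK] with z hz hzK w hw
  by_contra hwU
  exact hz w ⟨hzK hw, hwU⟩ hw

section DeltaExpansion

variable {n : ℕ} {D : EuclideanSpace ℝ (Fin n) → Set (EuclideanSpace ℝ (Fin n))}

theorem deltaExpansion_subset_cthickening (hne : ∀ z, (D z).Nonempty)
    {x₀ x : EuclideanSpace ℝ (Fin n)} {δ ε r : ℝ} (hε : 0 ≤ ε)
    (hD : ∀ z, dist z x₀ < r → D z ⊆ cthickening ε (D x₀)) (hr : δ + dist x x₀ < r) :
    deltaExpansion D δ x ⊆ cthickening (δ + ε) (D x₀) := by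
  rintro w ⟨z, hzx, hwz⟩
  have hδ : 0 ≤ δ := (norm_nonneg _).trans hzx
  have hz : dist z x₀ < r := by
    linarith [dist_triangle z x x₀, dist_eq_norm z x]
  have hw : w ∈ cthickening δ (D z) := (mem_cthickening_iff_infDist_le (hne z) hδ).mpr hwz
  exact cthickening_cthickening_subset hδ hε _ (cthickening_subset_of_subset δ (hD z hz) hw)

theorem eventually_convexHull_deltaExpansion_subset (hne : ∀ z, (D z).Nonempty)
    {x₀ : EuclideanSpace ℝ (Fin n)} (hconv : Convex ℝ (D x₀)) {T : ℝ} (hT : 0 < T)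
    (hD : ∀ᶠ z in 𝓝 x₀, D z ⊆ thickening (T / 2) (D x₀)) :
    ∀ᶠ p : ℝ × EuclideanSpace ℝ (Fin n) in 𝓝 (0, x₀),
      convexHull ℝ (deltaExpansion D p.1 p.2) ⊆ deltaExpansion D T p.2 := by
  obtain ⟨r, hr, hDr⟩ := Metric.eventually_nhds_iff.mp hD
  set ρ := min (r / 2) (T / 2)
  have hρr : ρ ≤ r / 2 := min_le_left _ _
  have hρT : ρ ≤ T / 2 := min_le_right _ _
  have hρ : 0 < ρ := lt_min (half_pos hr) (half_pos hT)
  have hfst : ∀ᶠ p : ℝ × EuclideanSpace ℝ (Fin n) in 𝓝 (0, x₀), p.1 < ρ :=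
    (continuous_fst.tendsto _).eventually (eventually_lt_nhds hρ)
  have hsnd : ∀ᶠ p : ℝ × EuclideanSpace ℝ (Fin n) in 𝓝 (0, x₀), dist p.2 x₀ < ρ :=
    (continuous_snd.tendsto (0, x₀)).eventually (ball_mem_nhds x₀ hρ)
  filter_upwards [hfst, hsnd] with ⟨δ, x⟩ hδ hx
  have hexp : deltaExpansion D δ x ⊆ cthickening T (D x₀) :=
    (deltaExpansion_subset_cthickening hne (half_pos hT).le
      (fun z hz => (hDr hz).trans (thickening_subset_cthickening _ _)) (by linarith)).trans
      (cthickening_mono (by linarith) _)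
  intro w hw
  refine ⟨x₀, by rw [← dist_eq_norm, dist_comm]; linarith, ?_⟩
  exact (mem_cthickening_iff_infDist_le (hne x₀) hT.le).mp
    (convexHull_min hexp (hconv.cthickening T) hw)

end DeltaExpansion

theorem stmt10_general (n : ℕ) (D : EuclideanSpace ℝ (Fin n) → Set (EuclideanSpace ℝ (Fin n)))
    (hgraph : IsClosed {p : EuclideanSpace ℝ (Fin n) × EuclideanSpace ℝ (Fin n) | p.2 ∈ D p.1})
    (hne : ∀ x, (D x).Nonempty) (hconv : ∀ x, Convex ℝ (D x))
    (hlocbdd : ∀ K : Set (EuclideanSpace ℝ (Fin n)), IsCompact K →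
      ∃ C : ℝ, ∀ x ∈ K, ∀ d ∈ D x, ‖d‖ ≤ C)
    (δ : ℕ → ℝ) (hδ : Tendsto δ atTop (nhds 0))
    (x d : ℕ → EuclideanSpace ℝ (Fin n))
    (hxbdd : ∃ M : ℝ, ∀ k, ‖x k‖ ≤ M)
    (hd : ∀ k, d k ∈ convexHull ℝ (deltaExpansion D (δ k) (x k))) :
    ∀ T > (0 : ℝ), ∃ K : ℕ, ∀ k ≥ K, d k ∈ deltaExpansion D T (x k) := by
  intro T hT
  have husc : ∀ x₀, ∀ᶠ z in 𝓝 x₀, D z ⊆ thickening (T / 2) (D x₀) := by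
    intro x₀
    obtain ⟨C, hC⟩ := hlocbdd _ (isCompact_closedBall x₀ 1)
    refine eventually_subset_of_isClosed_graph hgraph (isCompact_closedBall 0 C) ?_
      isOpen_thickening (self_subset_thickening (half_pos hT) _)
    filter_upwards [closedBall_mem_nhds x₀ one_pos] with z hz w hw
    simpa using hC z hz w hw
  obtain ⟨M, hM⟩ := hxbdd
  have hunif : ∀ᶠ ε in 𝓝 (0 : ℝ), ∀ y ∈ closedBall 0 M,
      convexHull ℝ (deltaExpansion D ε y) ⊆ deltaExpansion D T y :=
    (isCompact_closedBall 0 M).eventually_forall_of_forall_eventually fun x₀ _ =>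
      eventually_convexHull_deltaExpansion_subset hne (hconv x₀) hT (husc x₀)
  obtain ⟨K, hK⟩ := eventually_atTop.mp (hδ.eventually hunif)
  exact ⟨K, fun k hk => hK k hk (x k) (by simpa using hM k) (hd k)⟩

theorem stmt10 (n : ℕ) (D : EuclideanSpace ℝ (Fin n) → Set (EuclideanSpace ℝ (Fin n)))
    (hgraph : IsClosed {p : EuclideanSpace ℝ (Fin n) × EuclideanSpace ℝ (Fin n) | p.2 ∈ D p.1})
    (hne : ∀ x, (D x).Nonempty) (hclosed : ∀ x, IsClosed (D x)) (hconv : ∀ x, Convex ℝ (D x))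
    (hlocbdd : ∀ K : Set (EuclideanSpace ℝ (Fin n)), IsCompact K →
      ∃ C : ℝ, ∀ x ∈ K, ∀ d ∈ D x, ‖d‖ ≤ C)
    (δ : ℕ → ℝ) (hδnonneg : ∀ k, 0 ≤ δ k) (hδ : Tendsto δ atTop (nhds 0))
    (x d : ℕ → EuclideanSpace ℝ (Fin n))
    (hxbdd : ∃ M : ℝ, ∀ k, ‖x k‖ ≤ M)
    (hd : ∀ k, d k ∈ convexHull ℝ (deltaExpansion D (δ k) (x k))) :
    ∀ T > (0 : ℝ), ∃ K : ℕ, ∀ k ≥ K, d k ∈ deltaExpansion D T (x k) :=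
  stmt10_general n D hgraph hne hconv hlocbdd δ hδ x d hxbdd hd
end

section
/- Let $f: \mathbb{R}^n \to \mathbb{R}$ be continuous and let $\{x_k\}$ be a bounded sequence in $\mathbb{R}^n$ with $\lim_{k\to\infty} \|x_{k+1} - x_k\| = 0$. Let $\mathcal{B}$ be the set of cluster points of $\{x_k\}$. Then the set $\{f(x) : x \in \mathcal{B}\}$ is a connected subset of $\mathbb{R}$ (i.e., an interval). -/
/-!
Suppose the cluster set `B` splits into two disjoint nonempty compact pieces `A` and `C`, at
distance more than `δ` from each other. By compactness the sequence eventually stays in the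
`δ/2`-neighbourhood of `B`, and eventually its steps are shorter than `δ/2`, so from some time
on it can never jump from near `A` to near `C`. But it comes near `A` and near `C` infinitely
often. Hence `B` is connected, and so is its continuous image `f '' B`.
-/

open Filter Metric Set Topology

theorem Filter.eventually_atTop_of_frequently_of_eventually_imp_succ {p : ℕ → Prop}
    (hp : ∃ᶠ k in atTop, p k) (hsucc : ∀ᶠ k in atTop, p k → p (k + 1)) :
    ∀ᶠ k in atTop, p k := by
  obtain ⟨N, hN⟩ := eventually_atTop.1 hsucc
  obtain ⟨k₀, hk₀N, hk₀⟩ := frequently_atTop.1 hp N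
  refine eventually_atTop.2 ⟨k₀, fun k hk => ?_⟩
  induction k, hk using Nat.le_induction with
  | base => exact hk₀
  | succ k hk ih => exact hN k (hk₀N.trans hk) ih

theorem mapClusterPt_atTop_iff_exists_strictMono_tendsto {X : Type*} [TopologicalSpace X]
    [FirstCountableTopology X] {x : ℕ → X} {y : X} :
    MapClusterPt y atTop x ↔ ∃ φ : ℕ → ℕ, StrictMono φ ∧ Tendsto (fun j => x (φ j)) atTop (𝓝 y) :=
  ⟨MapClusterPt.tendsto_subseq, fun ⟨_, hφ, hlim⟩ =>
    MapClusterPt.of_comp hφ.tendsto_atTop hlim.mapClusterPt⟩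

theorem IsCompact.eventually_mem_of_setOf_mapClusterPt_subset {X ι : Type*} [TopologicalSpace X]
    {K U : Set X} {l : Filter ι} {u : ι → X} (hK : IsCompact K) (huK : ∀ᶠ i in l, u i ∈ K)
    (hU : IsOpen U) (hclusterU : {y | MapClusterPt y l u} ⊆ U) :
    ∀ᶠ i in l, u i ∈ U := by
  by_contra h
  obtain ⟨y, hy, hyc⟩ := (hK.diff hU).exists_mapClusterPt_of_frequently
    ((not_eventually.1 h).and_eventually huK |>.mono fun _ hi => ⟨hi.2, hi.1⟩)
  exact hy.2 (hclusterU hyc)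

theorem IsCompact.isCompact_setOf_mapClusterPt {X ι : Type*} [TopologicalSpace X] [R1Space X]
    {K : Set X} {l : Filter ι} {u : ι → X} (hK : IsCompact K) (huK : ∀ᶠ i in l, u i ∈ K) :
    IsCompact {y | MapClusterPt y l u} :=
  hK.closure.of_isClosed_subset isClosed_setOfPred_clusterPt fun _ hy =>
    isClosed_closure.mem_of_mapClusterPt hy (huK.mono fun _ hi => subset_closure hi)

theorem isPreconnected_setOf_mapClusterPt_of_tendsto_dist_succ {X : Type*} [PseudoMetricSpace X]
    {K : Set X} {x : ℕ → X} (hK : IsCompact K) (hxK : ∀ k, x k ∈ K)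
    (hstep : Tendsto (fun k => dist (x (k + 1)) (x k)) atTop (𝓝 0)) :
    IsPreconnected {y | MapClusterPt y atTop x} := by
  set B := {y | MapClusterPt y atTop x}
  have hB : IsCompact B := hK.isCompact_setOf_mapClusterPt (.of_forall hxK)
  rw [isPreconnected_closed_iff]
  rintro t t' ht ht' hBtt' ⟨a, haB, hat⟩ ⟨c, hcB, hct'⟩
  by_contra hdisj
  have hdisjoint : Disjoint (B ∩ t) (B ∩ t') := by
    rw [disjoint_iff_inter_eq_empty, ← inter_inter_distrib_left]
    exact not_nonempty_iff_eq_empty.1 hdisj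
  obtain ⟨δ, hδ, hsep⟩ :=
    hdisjoint.exists_thickenings (hB.inter_right ht) (isClosed_setOfPred_clusterPt.inter ht')
  set U := thickening (δ / 2) (B ∩ t)
  set V := thickening (δ / 2) (B ∩ t')
  have hnear : ∀ᶠ k in atTop, x k ∈ U ∪ V := by
    refine hK.eventually_mem_of_setOf_mapClusterPt_subset (Eventually.of_forall hxK)
      (isOpen_thickening.union isOpen_thickening) fun y hy => ?_
    rcases hBtt' hy with hyt | hyt'
    · exact Or.inl (self_subset_thickening (half_pos hδ) _ ⟨hy, hyt⟩)
    · exact Or.inr (self_subset_thickening (half_pos hδ) _ ⟨hy, hyt'⟩)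
  have hfrequently : ∀ S, ∀ y ∈ B ∩ S, ∃ᶠ k in atTop, x k ∈ thickening (δ / 2) (B ∩ S) :=
    fun S y hy => mapClusterPt_iff_frequently.1 hy.1 _
      (isOpen_thickening.mem_nhds (self_subset_thickening (half_pos hδ) _ hy))
  -- a step of length `< δ/2` ending in `V` starts in the `δ`-thickening of `B ∩ t'`
  have hstay : ∀ᶠ k in atTop, x k ∈ U → x (k + 1) ∈ U := by
    filter_upwards [(tendsto_add_atTop_nat 1).eventually hnear,
      hstep.eventually_lt_const (half_pos hδ)] with k hnext hsmall hk
    refine hnext.resolve_right fun hkV => hsep.ne_of_mem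
      (thickening_mono (half_le_self hδ.le) _ hk) ?_ rfl
    have : x k ∈ thickening (δ / 2) V := mem_thickening_iff.2 ⟨_, hkV, by rwa [dist_comm]⟩
    simpa only [add_halves] using thickening_thickening_subset _ _ _ this
  have hU : ∀ᶠ k in atTop, x k ∈ U :=
    eventually_atTop_of_frequently_of_eventually_imp_succ (hfrequently t a ⟨haB, hat⟩) hstay
  obtain ⟨k, hkV, hkU⟩ := ((hfrequently t' c ⟨hcB, hct'⟩).and_eventually hU).exists
  exact hsep.ne_of_mem (thickening_mono (half_le_self hδ.le) _ hkU)
    (thickening_mono (half_le_self hδ.le) _ hkV) rfl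

theorem stmt11 (n : ℕ) (f : EuclideanSpace ℝ (Fin n) → ℝ) (hf : Continuous f)
    (x : ℕ → EuclideanSpace ℝ (Fin n))
    (hxbdd : ∃ M : ℝ, ∀ k, ‖x k‖ ≤ M)
    (hdiff : Tendsto (fun k => ‖x (k + 1) - x k‖) atTop (nhds 0)) :
    IsConnected
      (f '' {y | ∃ φ : ℕ → ℕ, StrictMono φ ∧ Tendsto (fun j => x (φ j)) atTop (nhds y)}) := by
  obtain ⟨M, hM⟩ := hxbdd
  have hxK : ∀ k, x k ∈ closedBall 0 M := by simpa only [mem_closedBall_zero_iff] using hM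
  simp only [← mapClusterPt_atTop_iff_exists_strictMono_tendsto]
  obtain ⟨y, -, hy⟩ :=
    (isCompact_closedBall 0 M).exists_mapClusterPt_of_frequently (.of_forall (f := atTop) hxK)
  refine ⟨⟨f y, y, hy, rfl⟩, IsPreconnected.image ?_ f hf.continuousOn⟩
  exact isPreconnected_setOf_mapClusterPt_of_tendsto_dist_succ (isCompact_closedBall 0 M) hxK
    (by simpa only [dist_eq_norm] using hdiff)
end

section
/- Let $f: \mathbb{R}^n \to \mathbb{R}$ be continuous, $\{x_k\}$ a bounded sequence with $\|x_{k+1} - x_k\| \to 0$, and suppose every cluster point of $\{x_k\}$ lies in a set $S \subseteq \mathbb{R}^n$ such that $f(S)$ has empty interior in $\mathbb{R}$. Then the sequence $\{f(x_k)\}$ converges. -/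
open Filter

theorem stmt12 (n : ℕ) (f : EuclideanSpace ℝ (Fin n) → ℝ) (hf : Continuous f)
    (x : ℕ → EuclideanSpace ℝ (Fin n))
    (hxbdd : ∃ M : ℝ, ∀ k, ‖x k‖ ≤ M)
    (hdiff : Tendsto (fun k => ‖x (k + 1) - x k‖) atTop (nhds 0))
    (S : Set (EuclideanSpace ℝ (Fin n)))
    (hcluster : ∀ y, (∃ φ : ℕ → ℕ, StrictMono φ ∧ Tendsto (fun j => x (φ j)) atTop (nhds y)) →
      y ∈ S)
    (hint : interior (f '' S) = ∅) :
    ∃ L : ℝ, Tendsto (fun k => f (x k)) atTop (nhds L) := by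
  classical
  obtain ⟨M, hM⟩ := hxbdd
  set a : ℕ → ℝ := fun k => f (x k) with ha
  set K : Set (EuclideanSpace ℝ (Fin n)) := Metric.closedBall 0 M with hKdef
  have hK : IsCompact K := isCompact_closedBall _ _
  have hxK : ∀ k, x k ∈ K := fun k => by
    simpa [hKdef, Metric.mem_closedBall, dist_zero_right] using hM k
  -- boundedness of a
  obtain ⟨C, hC⟩ := hK.exists_bound_of_continuousOn hf.continuousOn
  have haC : ∀ k, |a k| ≤ C := fun k => by
    simpa using hC (x k) (hxK k)
  have hbdd_le : IsBoundedUnder (· ≤ ·) atTop a :=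
    Filter.isBoundedUnder_of ⟨C, fun k => (le_abs_self (a k)).trans (haC k)⟩
  have hbdd_ge : IsBoundedUnder (· ≥ ·) atTop a :=
    Filter.isBoundedUnder_of ⟨-C, fun k => neg_le_of_abs_le (haC k)⟩
  -- differences of a tend to 0
  have hadiff : ∀ ε > (0:ℝ), ∀ᶠ k in atTop, |a (k + 1) - a k| < ε := by
    intro ε hε
    have hUC : UniformContinuousOn f K := hK.uniformContinuousOn_of_continuous hf.continuousOn
    obtain ⟨δ, hδ, hδ'⟩ := (Metric.uniformContinuousOn_iff.mp hUC) ε hε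
    have : ∀ᶠ k in atTop, ‖x (k + 1) - x k‖ < δ := by
      have := Metric.tendsto_atTop.mp hdiff δ hδ
      obtain ⟨N, hN⟩ := this
      exact Filter.eventually_atTop.mpr ⟨N, fun k hk => by
        have := hN k hk
        rwa [Real.dist_eq, sub_zero, abs_of_nonneg (norm_nonneg _)] at this⟩
    refine this.mono fun k hk => ?_
    have := hδ' (x (k + 1)) (hxK _) (x k) (hxK _) (by rwa [dist_eq_norm])
    rwa [Real.dist_eq] at this
  -- every c between liminf and limsup is frequently approximated
  have hfreq : ∀ c : ℝ, liminf a atTop ≤ c → c ≤ limsup a atTop →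
      ∀ ε > (0:ℝ), ∃ᶠ k in atTop, |a k - c| < ε := by
    intro c hlc hcl ε hε
    by_contra h
    have hev : ∀ᶠ k in atTop, ε ≤ |a k - c| := by
      simpa [not_lt] using (Filter.not_frequently.mp h)
    obtain ⟨N, hN⟩ := Filter.eventually_atTop.mp (hev.and (hadiff ε hε))
    -- from index N on, the sequence stays on one side of c
    have hside : (∀ k ≥ N, a k ≤ c - ε) ∨ (∀ k ≥ N, c + ε ≤ a k) := by
      have hstep : ∀ k ≥ N, (a k ≤ c - ε → a (k+1) ≤ c - ε) ∧ (c + ε ≤ a k → c + ε ≤ a (k+1)) := by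
        intro k hk
        obtain ⟨h1, h2⟩ := hN (k+1) (le_trans hk (Nat.le_succ _))
        have hj := (hN k hk).2
        have hcases : a (k+1) ≤ c - ε ∨ c + ε ≤ a (k+1) := by
          rcases le_abs.mp h1 with h' | h'
          · right; linarith
          · left; linarith
        constructor
        · intro hak
          rcases hcases with h' | h'
          · exact h'
          · exfalso
            have := abs_lt.mp hj
            linarith [this.1, this.2]
        · intro hak
          rcases hcases with h' | h'
          · exfalso
            have := abs_lt.mp hj
            linarith [this.1, this.2]
          · exact h'
      have hN0 : a N ≤ c - ε ∨ c + ε ≤ a N := by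
        have h1 := (hN N le_rfl).1
        rcases le_abs.mp h1 with h' | h'
        · right; linarith
        · left; linarith
      rcases hN0 with h0 | h0
      · left
        intro k hk
        induction k with
        | zero => simpa [Nat.le_zero.mp hk] using h0
        | succ m ih =>
          rcases Nat.lt_or_ge N (m+1) with hlt | hge
          · exact (hstep m (Nat.lt_succ_iff.mp hlt)).1 (ih (Nat.lt_succ_iff.mp hlt))
          · have : N = m + 1 := le_antisymm hk hge
            simpa [← this] using h0
      · right
        intro k hk
        induction k with
        | zero => simpa [Nat.le_zero.mp hk] using h0
        | succ m ih =>
          rcases Nat.lt_or_ge N (m+1) with hlt | hge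
          · exact (hstep m (Nat.lt_succ_iff.mp hlt)).2 (ih (Nat.lt_succ_iff.mp hlt))
          · have : N = m + 1 := le_antisymm hk hge
            simpa [← this] using h0
    rcases hside with hside | hside
    · have : limsup a atTop ≤ c - ε :=
        Filter.limsup_le_of_le hbdd_ge.isCoboundedUnder_le (Filter.eventually_atTop.mpr ⟨N, hside⟩)
      linarith
    · have : c + ε ≤ liminf a atTop :=
        Filter.le_liminf_of_le hbdd_le.isCoboundedUnder_ge (Filter.eventually_atTop.mpr ⟨N, hside⟩)
      linarith
  -- every c between liminf and limsup is in f '' S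
  have hmem : ∀ c : ℝ, liminf a atTop ≤ c → c ≤ limsup a atTop → c ∈ f '' S := by
    intro c hlc hcl
    obtain ⟨φ, hφ, hφ'⟩ := Filter.extraction_forall_of_frequently
      (fun m => hfreq c hlc hcl (1 / (m + 1)) (by positivity))
    have haφ : Tendsto (fun m => a (φ m)) atTop (nhds c) := by
      rw [Metric.tendsto_atTop]
      intro ε hε
      obtain ⟨m0, hm0⟩ := exists_nat_one_div_lt hε
      refine ⟨m0, fun m hm => ?_⟩
      rw [Real.dist_eq]
      calc |a (φ m) - c| < 1 / (m + 1) := hφ' m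
        _ ≤ 1 / (m0 + 1) := by
            apply one_div_le_one_div_of_le (by positivity)
            exact_mod_cast Nat.add_le_add_right hm 1
        _ < ε := hm0
    obtain ⟨y, -, ψ, hψ, hψ'⟩ := tendsto_subseq_of_bounded hK.isBounded
      (fun m => hxK (φ m))
    have hyS : y ∈ S := hcluster y ⟨φ ∘ ψ, hφ.comp hψ, hψ'⟩
    refine ⟨y, hyS, ?_⟩
    have h1 : Tendsto (fun j => a (φ (ψ j))) atTop (nhds (f y)) :=
      (hf.tendsto y).comp hψ'
    have h2 : Tendsto (fun j => a (φ (ψ j))) atTop (nhds c) :=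
      haφ.comp hψ.tendsto_atTop
    exact tendsto_nhds_unique h1 h2
  -- conclude liminf = limsup
  have hle : liminf a atTop ≤ limsup a atTop := liminf_le_limsup hbdd_le hbdd_ge
  have heq : liminf a atTop = limsup a atTop := by
    by_contra hne
    have hlt : liminf a atTop < limsup a atTop := lt_of_le_of_ne hle hne
    have hsub : Set.Ioo (liminf a atTop) (limsup a atTop) ⊆ f '' S := fun c hc =>
      hmem c hc.1.le hc.2.le
    have : Set.Ioo (liminf a atTop) (limsup a atTop) ⊆ interior (f '' S) :=
      (isOpen_Ioo.subset_interior_iff).mpr hsub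
    rw [hint] at this
    exact (Set.nonempty_Ioo.mpr hlt).ne_empty (Set.eq_empty_iff_forall_notMem.mpr
      fun c hc => this hc)
  exact ⟨limsup a atTop, tendsto_of_liminf_eq_limsup heq rfl hbdd_le hbdd_ge⟩
end
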